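/- If G is a connected Tutte-Berge simple graph on n vertices, then there exists a fundamental independent set T of the cone G* with |T| = |N_G(T)| + |V(G)| − 2·mat(G). -/

import Mathlib

open Finset

namespace TB

variable {V W : Type*}

/-- A matching of `G` given as a finite set of edges: each element is an edge of `G`
and no two distinct edges share a vertex. -/
def IsMatching (G : SimpleGraph V) (M : Finset (Sym2 V)) : Prop :=
  (∀ e ∈ M, e ∈ G.edgeSet) ∧
    ∀ e ∈ M, ∀ f ∈ M, e ≠ f → ∀ v : V, v ∈ e → v ∉ f

/-- A perfect matching: a matching covering every vertex. -/
def IsPerfectMatching (G : SimpleGraph V) (M : Finset (Sym2 V)) : Prop :=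
  IsMatching G M ∧ ∀ v : V, ∃ e ∈ M, v ∈ e

/-- The matching number `mat(G)`: the maximum size of a matching of `G`. -/
noncomputable def matchingNumber (G : SimpleGraph V) [Fintype V] : ℕ := by
  classical
  exact Finset.univ.powerset.sup fun M => if IsMatching G M then M.card else 0

/-- `T` is an independent set of `G`. -/
def IsIndepSet (G : SimpleGraph V) (T : Finset V) : Prop :=
  ∀ u ∈ T, ∀ v ∈ T, ¬ G.Adj u v

/-- The neighborhood `N_G(T)` of a set of vertices `T`. -/
noncomputable def nbrSet (G : SimpleGraph V) [Fintype V] (T : Finset V) : Finset V := by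
  classical
  exact Finset.univ.filter fun v => ∃ t ∈ T, G.Adj t v

/-- `G` is a Tutte-Berge graph: some independent set `T` satisfies
`|T| = |N_G(T)| + |V(G)| - 2 mat(G)` (written additively to avoid truncated subtraction). -/
noncomputable def TutteBerge (G : SimpleGraph V) [Fintype V] : Prop :=
  ∃ T : Finset V, IsIndepSet G T ∧
    T.card + 2 * matchingNumber G = (nbrSet G T).card + Fintype.card V

/-- `G` is factor-critical: deleting any vertex leaves a graph with a perfect matching. -/
def FactorCritical (G : SimpleGraph V) : Prop :=
  ∀ v : V, ∃ M, IsPerfectMatching (G.induce {x | x ≠ v}) M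

/-- The Gallai-Edmonds set `D(G)`: vertices missed by at least one maximum matching. -/
noncomputable def gallaiD (G : SimpleGraph V) [Fintype V] : Finset V := by
  classical
  exact Finset.univ.filter fun v =>
    ∃ M, IsMatching G M ∧ M.card = matchingNumber G ∧ ∀ e ∈ M, v ∉ e

/-- The cone `G*` over `G`: a new apex vertex (`none`) joined to every vertex of `G`. -/
def cone (G : SimpleGraph V) : SimpleGraph (Option V) :=
  SimpleGraph.fromRel fun a b =>
    a = none ∨ ∃ u v, a = some u ∧ b = some v ∧ G.Adj u v

/-- The edge polytope `P_H`: convex hull of the points `e_u + e_v` over edges `{u,v}` of `H`. -/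
noncomputable def edgePolytope (H : SimpleGraph W) : Set (W → ℝ) := by
  classical
  exact convexHull ℝ
    {x | ∃ u v, H.Adj u v ∧
      x = fun w => (if w = u then (1 : ℝ) else 0) + (if w = v then (1 : ℝ) else 0)}

/-- Every connected component of `H` contains an odd cycle. -/
def HasOddCycleComponents (H : SimpleGraph W) : Prop :=
  ∀ c : H.ConnectedComponent, ∃ u, u ∈ c.supp ∧ ∃ p : H.Walk u u, p.IsCycle ∧ Odd p.length

/-- The neighborhood of a set of vertices, as a set. -/
def nbrSetSet (H : SimpleGraph W) (T : Set W) : Set W := {w | ∃ t ∈ T, H.Adj t w}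

/-- The bipartite graph `B_H(T)` induced by `T`: vertex set `T ∪ N_H(T)`,
with the edges of `H` joining a vertex of `T` to a vertex of `N_H(T)`. -/
def inducedBipartite (H : SimpleGraph W) (T : Set W) :
    SimpleGraph ↥(T ∪ nbrSetSet H T) :=
  SimpleGraph.fromRel fun a b => (a : W) ∈ T ∧ H.Adj a b

/-- An independent set `T` is fundamental in `H` if `B_H(T)` is connected (trivially so
if empty) and, when `T ∪ N_H(T) ≠ V(H)`, each connected component of
`H \ (T ∪ N_H(T))` contains an odd cycle. -/
def Fundamental (H : SimpleGraph W) (T : Set W) : Prop :=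
  (∀ u ∈ T, ∀ v ∈ T, ¬ H.Adj u v) ∧
  (inducedBipartite H T).Preconnected ∧
  (T ∪ nbrSetSet H T ≠ Set.univ →
    HasOddCycleComponents (H.induce (T ∪ nbrSetSet H T)ᶜ))



section WalkLemmas
variable {W : Type*} {H : SimpleGraph W}

lemma closed_path_nil {u : W} (p : H.Walk u u) (hp : p.IsPath) : p = SimpleGraph.Walk.nil := by
  cases p with
  | nil => rfl
  | cons h q =>
    exfalso
    have hnd := hp.support_nodup
    rw [SimpleGraph.Walk.support_cons] at hnd
    exact (List.nodup_cons.mp hnd).1 q.end_mem_support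

lemma cycle_of_cons {x y : W} (h : H.Adj x y) (p : H.Walk y x) (hp : p.IsPath)
    (he : Even p.length) : (SimpleGraph.Walk.cons h p).IsCycle := by
  rw [SimpleGraph.Walk.cons_isCycle_iff]
  refine ⟨hp, fun hmem => ?_⟩
  cases p with
  | nil => exact H.irrefl h
  | cons h2 p2 =>
    rw [SimpleGraph.Walk.edges_cons, List.mem_cons] at hmem
    rcases hmem with heq | hmem2
    · have hxz := Sym2.eq_iff.mp heq
      rcases hxz with ⟨hxy, _⟩ | ⟨rfl, hz⟩
      · exact H.ne_of_adj h hxy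
      · have hp2 : p2.IsPath := hp.of_cons
        have := closed_path_nil p2 hp2
        subst this
        simp [SimpleGraph.Walk.length_cons] at he
    · have hy : y ∈ p2.support := by
        have : s(y, x) ∈ p2.edges := by rwa [Sym2.eq_swap] at hmem2
        exact p2.fst_mem_support_of_mem_edges this
      have hnd := hp.support_nodup
      rw [SimpleGraph.Walk.support_cons] at hnd
      exact (List.nodup_cons.mp hnd).1 hy

/-- Either there is an odd cycle reachable from `a`, or there's a path `a → b`
with the same parity as `w`. -/
lemma exists_oddCycle_or_parityPath :
    ∀ (n : ℕ) {a b : W} (w : H.Walk a b), w.length = n →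
    (∃ v, H.Reachable a v ∧ ∃ c : H.Walk v v, c.IsCycle ∧ Odd c.length) ∨
    ∃ p : H.Walk a b, p.IsPath ∧ p.length % 2 = w.length % 2 := by
  intro n
  induction n using Nat.strong_induction_on with
  | _ n IH =>
    intro a b w hlen
    classical
    by_cases hnd : w.support.Nodup
    · exact Or.inr ⟨w, SimpleGraph.Walk.IsPath.mk' hnd, rfl⟩
    · obtain ⟨x, hdup⟩ := List.exists_duplicate_iff_not_nodup.mpr hnd
      have hx : x ∈ w.support := hdup.mem
      have hcount : 2 ≤ w.support.count x := List.duplicate_iff_two_le_count.mp hdup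
      obtain ⟨q, r, hspec, hcq⟩ :
          ∃ (q : H.Walk a x) (r : H.Walk x b), q.append r = w ∧ q.support.count x = 1 :=
        ⟨w.takeUntil x hx, w.dropUntil x hx, w.take_spec hx,
          w.count_support_takeUntil_eq_one hx⟩
      have hsup : w.support = q.support ++ r.support.tail := by
        rw [← hspec, SimpleGraph.Walk.support_append]
      have hxr : x ∈ r.support.tail := by
        rw [hsup, List.count_append, hcq] at hcount
        have : 1 ≤ r.support.tail.count x := by omega
        exact List.count_pos_iff.mp this
      have hlsum : q.length + r.length = n := by
        rw [← hlen, ← hspec, SimpleGraph.Walk.length_append]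
      cases r with
      | nil => simp at hxr
      | cons h' r' =>
        rename_i z
        have hxr' : x ∈ r'.support := by
          rwa [SimpleGraph.Walk.support_cons, List.tail_cons] at hxr
        obtain ⟨tk, dr, hspec2, htkle⟩ :
            ∃ (tk : H.Walk z x) (dr : H.Walk x b), tk.append dr = r' ∧ tk.length ≤ r'.length :=
          ⟨r'.takeUntil x hxr', r'.dropUntil x hxr', r'.take_spec hxr',
            r'.length_takeUntil_le hxr'⟩
        have hl2 : tk.length + dr.length = r'.length := by
          rw [← hspec2, SimpleGraph.Walk.length_append]
        rw [SimpleGraph.Walk.length_cons] at hlsum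
        by_cases hpar : (1 + tk.length) % 2 = 0
        · have hlt : (q.append dr).length < n := by
            rw [SimpleGraph.Walk.length_append]; omega
          rcases IH _ hlt (q.append dr) rfl with h | ⟨p, hp, hp2⟩
          · exact Or.inl h
          · refine Or.inr ⟨p, hp, ?_⟩
            rw [SimpleGraph.Walk.length_append] at hp2
            rw [hlen]
            omega
        · have hlt : tk.length < n := by omega
          rcases IH _ hlt tk rfl with ⟨v, hrch, hc⟩ | ⟨p, hp, hp2⟩
          · exact Or.inl ⟨v, q.reachable.trans (h'.reachable.trans hrch), hc⟩
          · have hev : Even p.length := by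
              rw [Nat.even_iff]; omega
            refine Or.inl ⟨x, ⟨q⟩, SimpleGraph.Walk.cons h' p, cycle_of_cons h' p hp hev, ?_⟩
            rw [SimpleGraph.Walk.length_cons, Nat.odd_iff]
            omega

/-- An odd closed walk yields an odd cycle (reachable from its basepoint). -/
lemma oddCycle_of_oddClosedWalk {u : W} (w : H.Walk u u) (hodd : Odd w.length) :
    ∃ v, H.Reachable u v ∧ ∃ c : H.Walk v v, c.IsCycle ∧ Odd c.length := by
  rcases exists_oddCycle_or_parityPath w.length w rfl with h | ⟨p, hp, hp2⟩
  · exact h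
  · exfalso
    have := closed_path_nil p hp
    subst this
    rw [Nat.odd_iff] at hodd
    simp at hp2
    omega


lemma induce_adj' {s : Set W} {a b : ↥s} : (H.induce s).Adj a b ↔ H.Adj ↑a ↑b := by simp

lemma hasOddCycleComponents_of
    (h : ∀ x : W, ∃ u, H.Reachable x u ∧ ∃ w : H.Walk u u, Odd w.length) :
    HasOddCycleComponents H := by
  intro c
  obtain ⟨x, hx⟩ := c.exists_rep
  obtain ⟨u, hru, w, hw⟩ := h x
  obtain ⟨v, hrv, cyc, hc, ho⟩ := oddCycle_of_oddClosedWalk w hw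
  refine ⟨v, ?_, cyc, hc, ho⟩
  rw [SimpleGraph.ConnectedComponent.mem_supp_iff, ← hx]
  exact SimpleGraph.ConnectedComponent.sound (hru.trans hrv).symm

end WalkLemmas

section MatchingLemmas
variable {V : Type*} [Fintype V] (G : SimpleGraph V)

lemma exists_max_matching :
    ∃ M : Finset (Sym2 V), IsMatching G M ∧ M.card = matchingNumber G := by
  classical
  obtain ⟨M, -, hsup⟩ := Finset.exists_mem_eq_sup (Finset.univ (α := Sym2 V)).powerset
    ⟨∅, by simp⟩ (fun M => if IsMatching G M then M.card else 0)
  by_cases hmat : IsMatching G M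
  · exact ⟨M, hmat, by rw [matchingNumber, hsup, if_pos hmat]⟩
  · refine ⟨∅, ⟨by simp, by simp⟩, ?_⟩
    rw [matchingNumber, hsup, if_neg hmat]
    simp

lemma two_mul_card_of_matching {M : Finset (Sym2 V)} (hM : IsMatching G M) :
    ∃ C : Finset V, C.card = 2 * M.card ∧ ∀ v, v ∈ C ↔ ∃ e ∈ M, v ∈ e := by
  classical
  refine ⟨M.biUnion (fun e => Finset.univ.filter (· ∈ e)), ?_, ?_⟩
  · rw [Finset.card_biUnion]
    · have h2 : ∀ e ∈ M, (Finset.univ.filter (· ∈ e)).card = 2 := by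
        intro e he
        have hedge := hM.1 e he
        induction e with
        | h a b =>
          rw [SimpleGraph.mem_edgeSet] at hedge
          have hab : a ≠ b := G.ne_of_adj hedge
          have : Finset.univ.filter (· ∈ s(a, b)) = {a, b} := by
            ext v
            simp [Sym2.mem_iff]
          rw [this, Finset.card_pair hab]
      rw [Finset.sum_congr rfl h2]
      rw [Finset.sum_const, smul_eq_mul, mul_comm]
    · intro e he f hf hne
      simp only [Finset.disjoint_left, Finset.mem_filter]
      rintro v ⟨-, hv⟩ ⟨-, hv'⟩
      exact hM.2 e he f hf hne v hv hv'
  · intro v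
    simp

lemma matching_bound (T : Finset V) (hT : IsIndepSet G T) :
    T.card + 2 * matchingNumber G ≤ (nbrSet G T).card + Fintype.card V := by
  classical
  obtain ⟨M, hM, hMcard⟩ := exists_max_matching G
  obtain ⟨C, hCcard, hCmem⟩ := two_mul_card_of_matching G hM
  set cov := T.filter (fun t => ∃ e ∈ M, t ∈ e) with hcov
  -- injection from covered T-vertices into the neighborhood
  have hinj : cov.card ≤ (nbrSet G T).card := by
    have hmaps : ∀ t ∈ cov, ∀ (h : ∃ e ∈ M, t ∈ e),
        G.Adj t (Sym2.Mem.other' h.choose_spec.2) := by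
      intro t ht h
      have hsp : s(t, Sym2.Mem.other' h.choose_spec.2) = h.choose := Sym2.other_spec' _
      have : h.choose ∈ G.edgeSet := hM.1 _ h.choose_spec.1
      rw [← hsp, SimpleGraph.mem_edgeSet] at this
      exact this
    refine Finset.card_le_card_of_injOn
      (fun t => if h : ∃ e ∈ M, t ∈ e then Sym2.Mem.other' h.choose_spec.2 else t) ?_ ?_
    · intro t ht
      have hex : ∃ e ∈ M, t ∈ e := (Finset.mem_filter.mp ht).2
      dsimp only
      rw [dif_pos hex]
      rw [nbrSet]
      simp only [Finset.mem_coe, Finset.mem_filter, Finset.mem_univ, true_and]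
      exact ⟨t, (Finset.mem_filter.mp ht).1, hmaps t ht hex⟩
    · intro t1 ht1 t2 ht2 heq
      have hex1 : ∃ e ∈ M, t1 ∈ e := (Finset.mem_filter.mp (Finset.mem_coe.mp ht1)).2
      have hex2 : ∃ e ∈ M, t2 ∈ e := (Finset.mem_filter.mp (Finset.mem_coe.mp ht2)).2
      dsimp only at heq
      rw [dif_pos hex1, dif_pos hex2] at heq
      set o := Sym2.Mem.other' hex1.choose_spec.2 with ho
      have hsp1 : s(t1, o) = hex1.choose := Sym2.other_spec' _
      have hsp2 : s(t2, o) = hex2.choose := by rw [heq]; exact Sym2.other_spec' _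
      by_cases hee : hex1.choose = hex2.choose
      · have : s(t1, o) = s(t2, o) := by rw [hsp1, hsp2, hee]
        exact Sym2.congr_left.mp this
      · exfalso
        have ho1 : o ∈ hex1.choose := by rw [← hsp1]; exact Sym2.mem_mk_right _ _
        have ho2 : o ∈ hex2.choose := by rw [← hsp2]; rw [heq]; exact Sym2.mem_mk_right _ _
        exact hM.2 _ hex1.choose_spec.1 _ hex2.choose_spec.1 hee o ho1 ho2
  -- T \ cov is disjoint from the covered set C
  have hdisj : Disjoint (T \ cov) C := by
    rw [Finset.disjoint_left]
    intro v hv hvC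
    rw [Finset.mem_sdiff] at hv
    exact hv.2 (Finset.mem_filter.mpr ⟨hv.1, (hCmem v).mp hvC⟩)
  have hUcard : (T \ cov).card + C.card ≤ Fintype.card V := by
    rw [← Finset.card_union_of_disjoint hdisj]
    exact Finset.card_le_univ _
  have hcsub : cov ⊆ T := Finset.filter_subset _ _
  have hle := Finset.card_le_card hcsub
  have hsplit : cov.card + (T \ cov).card = T.card := by
    rw [Finset.card_sdiff_of_subset hcsub]
    omega
  omega

lemma exists_edge_of_matchingNumber_pos (h : 1 ≤ matchingNumber G) : ∃ a b, G.Adj a b := by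
  classical
  obtain ⟨M, hM, hMcard⟩ := exists_max_matching G
  have : M.Nonempty := by
    rw [← Finset.card_pos]
    omega
  obtain ⟨e, he⟩ := this
  have hedge := hM.1 e he
  induction e with
  | h a b =>
    rw [SimpleGraph.mem_edgeSet] at hedge
    exact ⟨a, b, hedge⟩

end MatchingLemmas

section Construction
variable {V : Type*} [Fintype V] (G : SimpleGraph V)

/-- The complement of `T ∪ N(T)` as a set. -/
def Kset (T : Finset V) : Set V := {v | v ∉ T ∧ v ∉ nbrSet G T}

lemma mem_Kset_iff {T : Finset V} {v : V} : v ∈ Kset G T ↔ v ∉ T ∧ v ∉ nbrSet G T := Iff.rfl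

/-- All components of the graph induced on the complement of `T ∪ N(T)`
contain an odd closed walk. -/
def GoodT (T : Finset V) : Prop :=
  ∀ v : ↥(Kset G T), ∃ u, (G.induce (Kset G T)).Reachable v u ∧
    ∃ w : (G.induce (Kset G T)).Walk u u, Odd w.length

lemma mem_nbrSet_iff {T : Finset V} {v : V} : v ∈ nbrSet G T ↔ ∃ t ∈ T, G.Adj t v := by
  rw [nbrSet]
  simp

lemma induce_adj_iff {s : Set V} {a b : ↥s} : (G.induce s).Adj a b ↔ G.Adj ↑a ↑b := by
  simp

lemma step_lemma (T : Finset V) (hind : IsIndepSet G T)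
    (heq : T.card + 2 * matchingNumber G = (nbrSet G T).card + Fintype.card V)
    (r : ↥(Kset G T))
    (heven : ∀ u, (G.induce (Kset G T)).Reachable r u →
      ∀ w : (G.induce (Kset G T)).Walk u u, ¬ Odd w.length) :
    ∃ T₂ : Finset V, IsIndepSet G T₂ ∧
      (T₂.card + 2 * matchingNumber G = (nbrSet G T₂).card + Fintype.card V) ∧
      Kset G T₂ ⊆ Kset G T ∧ (r : V) ∉ Kset G T₂ := by
  classical
  set K := G.induce (Kset G T) with hK
  -- parity classes of the component of r
  set cls : ℕ → Finset V := fun ε => Finset.univ.filter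
    (fun v => ∃ (h : v ∈ Kset G T), ∃ w : K.Walk r ⟨v, h⟩, w.length % 2 = ε) with hcls
  have mem_cls : ∀ {ε v}, v ∈ cls ε ↔
      ∃ (h : v ∈ Kset G T), ∃ w : K.Walk r ⟨v, h⟩, w.length % 2 = ε := by
    intro ε v
    rw [hcls]
    simp
  -- parity is unique
  have par_unique : ∀ (v : V) (h : v ∈ Kset G T) (w1 w2 : K.Walk r ⟨v, h⟩),
      w1.length % 2 = w2.length % 2 := by
    intro v h w1 w2
    by_contra hne
    apply heven r (SimpleGraph.Reachable.refl r) (w1.append w2.reverse)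
    rw [SimpleGraph.Walk.length_append, SimpleGraph.Walk.length_reverse, Nat.odd_iff]
    omega
  -- each class avoids T ∪ N(T)
  have cls_out : ∀ {ε v}, v ∈ cls ε → v ∈ Kset G T := by
    intro ε v hv
    exact (mem_cls.mp hv).1
  -- classes are independent sets
  have cls_indep : ∀ (ε : ℕ) (x y : V), x ∈ cls ε → y ∈ cls ε → ¬ G.Adj x y := by
    intro ε x y hx hy hadj
    obtain ⟨hxs, wx, hwx⟩ := mem_cls.mp hx
    obtain ⟨hys, wy, hwy⟩ := mem_cls.mp hy
    have hKadj : K.Adj ⟨x, hxs⟩ ⟨y, hys⟩ := (induce_adj_iff G).mpr hadj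
    have := par_unique y hys (wx.concat hKadj) wy
    rw [SimpleGraph.Walk.length_concat] at this
    omega
  -- r is in class 0
  have hr0 : (r : V) ∈ cls 0 := by
    rw [mem_cls]
    exact ⟨r.2, SimpleGraph.Walk.nil, by simp⟩
  -- neighborhoods of extended sets
  have hnbr : ∀ ε : ℕ, (ε = 0 ∨ ε = 1) → ((cls 1).Nonempty ∨ ε = 0) →
      nbrSet G (T ∪ cls ε) = nbrSet G T ∪ cls (1 - ε) := by
    intro ε hε hne
    ext v
    constructor
    · intro hv
      obtain ⟨t, ht, hadj⟩ := (mem_nbrSet_iff G).mp hv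
      rcases Finset.mem_union.mp ht with htT | htX
      · exact Finset.mem_union_left _ ((mem_nbrSet_iff G).mpr ⟨t, htT, hadj⟩)
      · obtain ⟨hts, w, hw⟩ := mem_cls.mp htX
        by_cases hvS : v ∈ Kset G T
        · refine Finset.mem_union_right _ (mem_cls.mpr ⟨hvS, w.concat ((induce_adj_iff G).mpr hadj), ?_⟩)
          rw [SimpleGraph.Walk.length_concat]
          omega
        · rw [mem_Kset_iff] at hvS
          push_neg at hvS
          by_cases hvT : v ∈ T
          · exfalso
            exact hts.2 ((mem_nbrSet_iff G).mpr ⟨v, hvT, hadj.symm⟩)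
          · exact Finset.mem_union_left _ (hvS hvT)
    · intro hv
      rcases Finset.mem_union.mp hv with hvN | hvY
      · obtain ⟨t, ht, hadj⟩ := (mem_nbrSet_iff G).mp hvN
        exact (mem_nbrSet_iff G).mpr ⟨t, Finset.mem_union_left _ ht, hadj⟩
      · obtain ⟨hvs, w, hw⟩ := mem_cls.mp hvY
        by_cases hnil : w.length = 0
        · -- v is the root r, and ε = 1; use a first step of a walk to a class-1 vertex
          have hveqr : r = (⟨v, hvs⟩ : ↥(Kset G T)) := SimpleGraph.Walk.eq_of_length_eq_zero hnil
          have hε1 : ε = 1 := by omega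
          rcases hne with ⟨x₀, hx₀⟩ | h0
          · obtain ⟨hx₀s, w₀, hw₀⟩ := mem_cls.mp hx₀
            have hw₀nil : ¬ w₀.Nil := by
              rw [SimpleGraph.Walk.nil_iff_length_eq]
              omega
            obtain ⟨zz, h₀, q₀, hq₀⟩ := SimpleGraph.Walk.not_nil_iff.mp hw₀nil
            have hzz : (zz : V) ∈ cls ε := by
              rw [mem_cls]
              refine ⟨zz.2, (SimpleGraph.Walk.cons h₀ SimpleGraph.Walk.nil), ?_⟩
              rw [SimpleGraph.Walk.length_cons, SimpleGraph.Walk.length_nil]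
              omega
            refine (mem_nbrSet_iff G).mpr ⟨zz, Finset.mem_union_right _ hzz, ?_⟩
            have hadjr : G.Adj ↑r ↑zz := (induce_adj_iff G).mp h₀
            have hrv : (r : V) = v := congrArg Subtype.val hveqr
            rw [hrv] at hadjr
            exact hadjr.symm
          · omega
        · -- last step of the walk gives a neighbor in class ε
          have hwrev : ¬ w.reverse.Nil := by
            rw [SimpleGraph.Walk.nil_iff_length_eq, SimpleGraph.Walk.length_reverse]
            exact hnil
          obtain ⟨zz, h1, q, hq⟩ := SimpleGraph.Walk.not_nil_iff.mp hwrev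
          have hlq : w.length = q.length + 1 := by
            have := congrArg SimpleGraph.Walk.length hq
            rw [SimpleGraph.Walk.length_reverse, SimpleGraph.Walk.length_cons] at this
            omega
          have hzz : (zz : V) ∈ cls ε := by
            rw [mem_cls]
            refine ⟨zz.2, (q.reverse.copy rfl (by simp)), ?_⟩
            rw [SimpleGraph.Walk.length_copy, SimpleGraph.Walk.length_reverse]
            omega
          refine (mem_nbrSet_iff G).mpr ⟨zz, Finset.mem_union_right _ hzz, ?_⟩
          have : G.Adj v zz := (induce_adj_iff G).mp h1
          exact this.symm
  -- choose the larger parity class and extend T by it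
  have finish : ∀ (ε ε' : ℕ), ε' = 1 - ε → (ε = 0 ∨ ε = 1) → ((cls 1).Nonempty ∨ ε = 0) →
      (cls ε').card ≤ (cls ε).card → ((r : V) ∈ cls ε ∨ (r : V) ∈ cls ε') →
      ∃ T₂ : Finset V, IsIndepSet G T₂ ∧
        (T₂.card + 2 * matchingNumber G = (nbrSet G T₂).card + Fintype.card V) ∧
        Kset G T₂ ⊆ Kset G T ∧ (r : V) ∉ Kset G T₂ := by
    intro ε ε' hε' hε hne hcard hrmem
    have hnbr' : nbrSet G (T ∪ cls ε) = nbrSet G T ∪ cls ε' := by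
      rw [hε']
      exact hnbr ε hε hne
    refine ⟨T ∪ cls ε, ?_, ?_, ?_, ?_⟩
    · intro u hu v hv hadj
      rcases Finset.mem_union.mp hu with huT | huX <;>
        rcases Finset.mem_union.mp hv with hvT | hvX
      · exact hind u huT v hvT hadj
      · exact (cls_out hvX).2 ((mem_nbrSet_iff G).mpr ⟨u, huT, hadj⟩)
      · exact (cls_out huX).2 ((mem_nbrSet_iff G).mpr ⟨v, hvT, hadj.symm⟩)
      · exact cls_indep ε u v huX hvX hadj
    · have hdis1 : Disjoint T (cls ε) := by
        rw [Finset.disjoint_right]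
        intro x hx
        exact (cls_out hx).1
      have hdis2 : Disjoint (nbrSet G T) (cls ε') := by
        rw [Finset.disjoint_right]
        intro x hx
        exact (cls_out hx).2
      have hc1 : (T ∪ cls ε).card = T.card + (cls ε).card :=
        Finset.card_union_of_disjoint hdis1
      have hc2 : (nbrSet G (T ∪ cls ε)).card = (nbrSet G T).card + (cls ε').card := by
        rw [hnbr', Finset.card_union_of_disjoint hdis2]
      have hub := matching_bound G (T ∪ cls ε) (by
        intro u hu v hv hadj
        rcases Finset.mem_union.mp hu with huT | huX <;>
          rcases Finset.mem_union.mp hv with hvT | hvX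
        · exact hind u huT v hvT hadj
        · exact (cls_out hvX).2 ((mem_nbrSet_iff G).mpr ⟨u, huT, hadj⟩)
        · exact (cls_out huX).2 ((mem_nbrSet_iff G).mpr ⟨v, hvT, hadj.symm⟩)
        · exact cls_indep ε u v huX hvX hadj)
      omega
    · intro v hv
      rw [mem_Kset_iff] at hv ⊢
      refine ⟨fun hvT => hv.1 (Finset.mem_union_left _ hvT), fun hvN => ?_⟩
      exact hv.2 (by rw [hnbr']; exact Finset.mem_union_left _ hvN)
    · rw [mem_Kset_iff]
      push_neg
      intro hrT
      rcases hrmem with hr | hr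
      · exact absurd (Finset.mem_union_right _ hr) hrT
      · rw [hnbr']
        exact Finset.mem_union_right _ hr
  by_cases hc : (cls 1).card ≤ (cls 0).card
  · exact finish 0 1 rfl (Or.inl rfl) (Or.inr rfl) hc (Or.inl hr0)
  · push_neg at hc
    have hne1 : (cls 1).Nonempty := Finset.card_pos.mp (by omega)
    exact finish 1 0 rfl (Or.inr rfl) (Or.inl hne1) hc.le (Or.inr hr0)

end Construction

section Main
variable {V : Type*} [Fintype V] (G : SimpleGraph V)

open scoped Classical in
lemma exists_goodT (T₀ : Finset V) (hind₀ : IsIndepSet G T₀)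
    (heq₀ : T₀.card + 2 * matchingNumber G = (nbrSet G T₀).card + Fintype.card V) :
    ∃ T : Finset V, IsIndepSet G T ∧
      (T.card + 2 * matchingNumber G = (nbrSet G T).card + Fintype.card V) ∧ GoodT G T := by
  suffices H : ∀ (n : ℕ) (T : Finset V),
      (Finset.univ.filter (· ∈ Kset G T)).card = n → IsIndepSet G T →
      (T.card + 2 * matchingNumber G = (nbrSet G T).card + Fintype.card V) →
      ∃ T' : Finset V, IsIndepSet G T' ∧
        (T'.card + 2 * matchingNumber G = (nbrSet G T').card + Fintype.card V) ∧ GoodT G T' by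
    exact H _ T₀ rfl hind₀ heq₀
  intro n
  induction n using Nat.strong_induction_on with
  | _ n IH =>
    intro T hm hind heq
    by_cases hgood : GoodT G T
    · exact ⟨T, hind, heq, hgood⟩
    · rw [GoodT] at hgood
      push_neg at hgood
      obtain ⟨v, hv⟩ := hgood
      have heven : ∀ u, (G.induce (Kset G T)).Reachable v u →
          ∀ w : (G.induce (Kset G T)).Walk u u, ¬ Odd w.length := by
        intro u hru w hw
        exact (hv u hru w) hw
      obtain ⟨T₂, hind₂, heq₂, hsub, hout⟩ := step_lemma G T hind heq v heven
      have hlt : (Finset.univ.filter (· ∈ Kset G T₂)).card < n := by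
        rw [← hm]
        apply Finset.card_lt_card
        constructor
        · intro x hx
          rw [Finset.mem_filter] at hx ⊢
          exact ⟨hx.1, hsub hx.2⟩
        · intro hsup
          have : (v : V) ∈ Finset.univ.filter (· ∈ Kset G T₂) :=
            hsup (Finset.mem_filter.mpr ⟨Finset.mem_univ _, v.2⟩)
          exact hout (Finset.mem_filter.mp this).2
      exact IH _ hlt T₂ rfl hind₂ heq₂

lemma cone_adj_some_some {u v : V} : (cone G).Adj (some u) (some v) ↔ G.Adj u v := by
  rw [cone, SimpleGraph.fromRel_adj]
  constructor
  · rintro ⟨hne, h | h⟩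
    · rcases h with h | ⟨a, b, ha, hb, hab⟩
      · exact absurd h (by simp)
      · cases ha; cases hb; exact hab
    · rcases h with h | ⟨a, b, ha, hb, hab⟩
      · exact absurd h (by simp)
      · cases ha; cases hb; exact hab.symm
  · intro h
    exact ⟨by simpa using G.ne_of_adj h, Or.inl (Or.inr ⟨u, v, rfl, rfl, h⟩)⟩

lemma cone_adj_some_none {v : V} : (cone G).Adj (some v) none := by
  rw [cone, SimpleGraph.fromRel_adj]
  exact ⟨by simp, Or.inr (Or.inl rfl)⟩

lemma cone_adj_none_some {v : V} : (cone G).Adj none (some v) :=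
  (cone_adj_some_none G).symm

end Main

/-- if `G` is a connected Tutte-Berge graph, then there is a fundamental
independent set `T` of the cone `G*` with `|T| = |N_G(T)| + |V(G)| - 2 mat(G)`
(written additively). -/
theorem exists_fundamental_witness_of_tutteBerge {V : Type*} [Fintype V]
    (G : SimpleGraph V) (hconn : G.Connected) (hTB : TutteBerge G) :
    ∃ T : Finset V, Fundamental (cone G) (some '' (T : Set V)) ∧
      T.card + 2 * matchingNumber G = (nbrSet G T).card + Fintype.card V := by
  classical
  obtain ⟨T₀, hind₀, heq₀⟩ := hTB
  obtain ⟨T, hind, heq, hgood⟩ := exists_goodT G T₀ hind₀ heq₀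
  refine ⟨T, ⟨?_, ?_, ?_⟩, heq⟩
  · -- independence in the cone
    rintro u ⟨a, ha, rfl⟩ v ⟨b, hb, rfl⟩ hadj
    exact hind a ha b hb ((cone_adj_some_some G).mp hadj)
  · -- preconnectedness of the induced bipartite graph
    rcases T.eq_empty_or_nonempty with rfl | ⟨t₀, ht₀⟩
    · intro u v
      exfalso
      have := u.2
      simp only [Finset.coe_empty, Set.image_empty, Set.mem_union, Set.mem_empty_iff_false,
        false_or, nbrSetSet, Set.mem_setOf_eq] at this
      obtain ⟨t, ht, -⟩ := this
      exact ht
    · have hnone : (none : Option V) ∈ nbrSetSet (cone G) (some '' (T : Set V)) :=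
        ⟨some t₀, ⟨t₀, ht₀, rfl⟩, cone_adj_some_none G⟩
      set apex : ↥((some '' (T : Set V)) ∪ nbrSetSet (cone G) (some '' (T : Set V))) :=
        ⟨none, Or.inr hnone⟩ with hapex
      have hadjT : ∀ a : ↥((some '' (T : Set V)) ∪ nbrSetSet (cone G) (some '' (T : Set V))),
          (a : Option V) ∈ some '' (T : Set V) →
          (inducedBipartite (cone G) (some '' (T : Set V))).Adj a apex := by
        intro a haT
        rw [inducedBipartite, SimpleGraph.fromRel_adj]
        obtain ⟨t, ht, hta⟩ := haT
        constructor
        · intro h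
          have : (a : Option V) = none := congrArg Subtype.val h
          rw [← hta] at this
          simp at this
        · refine Or.inl ⟨⟨t, ht, hta⟩, ?_⟩
          rw [← hta]
          exact cone_adj_some_none G
      have hreach : ∀ a, (inducedBipartite (cone G) (some '' (T : Set V))).Reachable a apex := by
        intro a
        by_cases haT : (a : Option V) ∈ some '' (T : Set V)
        · exact (hadjT a haT).reachable
        · rcases a.2 with h | h
          · exact absurd h haT
          · obtain ⟨t', ht', hadj⟩ := h
            have hba : (inducedBipartite (cone G) (some '' (T : Set V))).Adj ⟨t', Or.inl ht'⟩ a := by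
              rw [inducedBipartite, SimpleGraph.fromRel_adj]
              constructor
              · intro hh
                exact (cone G).ne_of_adj hadj (congrArg Subtype.val hh)
              · exact Or.inl ⟨ht', hadj⟩
            exact hba.symm.reachable.trans ((hadjT ⟨t', Or.inl ht'⟩ ht').reachable)
      intro u v
      exact (hreach u).trans (hreach v).symm
  · -- odd cycle components
    intro hUne
    rcases T.eq_empty_or_nonempty with rfl | ⟨t₀, ht₀⟩
    · -- empty witness: G has a perfect matching, cone is connected with a triangle
      have hnbre : nbrSet G (∅ : Finset V) = ∅ := by
        rw [nbrSet]
        simp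
      rw [Finset.card_empty, hnbre, Finset.card_empty] at heq
      have hVpos : 1 ≤ Fintype.card V := by
        have : Nonempty V := hconn.nonempty
        exact Fintype.card_pos
      obtain ⟨a, b, hab⟩ := exists_edge_of_matchingNumber_pos G (by omega)
      have hUempty : ∀ w : Option V,
          w ∈ ((some '' ((∅ : Finset V) : Set V)) ∪
            nbrSetSet (cone G) (some '' ((∅ : Finset V) : Set V)))ᶜ := by
        intro w
        rintro (⟨t, ht, -⟩ | ⟨t', ⟨t, ht, -⟩, -⟩) <;> simp at ht
      apply hasOddCycleComponents_of
      intro x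
      refine ⟨⟨none, hUempty none⟩, ?_, ?_⟩
      · obtain ⟨o, ho⟩ := x
        match o with
        | none => exact SimpleGraph.Reachable.refl _
        | some v =>
          exact (induce_adj'.mpr (cone_adj_some_none G)
            : (SimpleGraph.induce _ (cone G)).Adj ⟨some v, ho⟩ ⟨none, hUempty none⟩).reachable
      · refine ⟨SimpleGraph.Walk.cons (induce_adj'.mpr (cone_adj_none_some G)
            : (SimpleGraph.induce _ (cone G)).Adj ⟨none, hUempty none⟩ ⟨some a, hUempty (some a)⟩)
          (SimpleGraph.Walk.cons (induce_adj'.mpr ((cone_adj_some_some G).mpr hab))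
          (SimpleGraph.Walk.cons (induce_adj'.mpr (cone_adj_some_none G)
            : (SimpleGraph.induce _ (cone G)).Adj ⟨some b, hUempty (some b)⟩ ⟨none, hUempty none⟩)
            SimpleGraph.Walk.nil)), ?_⟩
        simp only [SimpleGraph.Walk.length_cons, SimpleGraph.Walk.length_nil]
        exact ⟨1, rfl⟩
    · -- nonempty witness: transfer the good complement structure through the cone
      have hnoneU : (none : Option V) ∈
          (some '' (T : Set V)) ∪ nbrSetSet (cone G) (some '' (T : Set V)) :=
        Or.inr ⟨some t₀, ⟨t₀, ht₀, rfl⟩, cone_adj_some_none G⟩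
      have hUc : ∀ w : Option V,
          w ∈ ((some '' (T : Set V)) ∪ nbrSetSet (cone G) (some '' (T : Set V)))ᶜ →
          ∃ v : V, w = some v ∧ v ∈ Kset G T := by
        intro w hw
        match w with
        | none => exact absurd hnoneU hw
        | some v =>
          refine ⟨v, rfl, ?_, ?_⟩
          · intro hvT
            exact hw (Or.inl ⟨v, hvT, rfl⟩)
          · intro hvN
            obtain ⟨t, ht, hadj⟩ := (mem_nbrSet_iff G).mp hvN
            exact hw (Or.inr ⟨some t, ⟨t, ht, rfl⟩, (cone_adj_some_some G).mpr hadj⟩)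
      have hKU : ∀ v : V, v ∈ Kset G T →
          (some v : Option V) ∈
            ((some '' (T : Set V)) ∪ nbrSetSet (cone G) (some '' (T : Set V)))ᶜ := by
        intro v hv
        rintro (⟨t, ht, hteq⟩ | ⟨t', ⟨t, ht, hteq⟩, hadj⟩)
        · rw [Option.some_inj] at hteq
          exact hv.1 (hteq ▸ ht)
        · rw [← hteq] at hadj
          exact hv.2 ((mem_nbrSet_iff G).mpr ⟨t, ht, (cone_adj_some_some G).mp hadj⟩)
      set Φ : G.induce (Kset G T) →g
          (cone G).induce ((some '' (T : Set V)) ∪ nbrSetSet (cone G) (some '' (T : Set V)))ᶜ :=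
        ⟨fun a => ⟨some ↑a, hKU ↑a a.2⟩, by
          intro a b hab
          exact induce_adj'.mpr ((cone_adj_some_some G).mpr (induce_adj'.mp hab))⟩ with hΦ
      apply hasOddCycleComponents_of
      intro x
      obtain ⟨v, hxv, hvK⟩ := hUc ↑x x.2
      obtain ⟨u, hru, w, hodd⟩ := hgood ⟨v, hvK⟩
      refine ⟨Φ u, ?_, w.map Φ, by rw [SimpleGraph.Walk.length_map]; exact hodd⟩
      have hx : x = Φ ⟨v, hvK⟩ := Subtype.ext hxv
      rw [hx]
      exact hru.map Φ

end TB
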